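/- arXiv:1007.2159 — 3 statements merged into one kernel-verified Lean document; each statement's English description precedes it below -/
import Mathlib

section
/- Let p be a prime, q = p^n, G = SL_2(F_q), V = (F_q)^2 the standard module, and T a Sylow p-subgroup of G. Then the set of g ∈ G fixing every element of C_V(T) is exactly T, i.e. C_G(C_V(T)) = T. -/
/-- The natural action of `SL₂(F)` on the standard module `F²`, by matrix-vector
multiplication. -/
instance sl2StdAction {m : Type*} [Fintype m] [DecidableEq m] {F : Type*} [CommRing F] :
    DistribMulAction (Matrix.SpecialLinearGroup m F) (m → F) where
  smul g v := (g : Matrix m m F).mulVec v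
  one_smul v := show ((1 : Matrix.SpecialLinearGroup m F) : Matrix m m F).mulVec v = v by
    simp [Matrix.one_mulVec]
  mul_smul g h v := show ((g * h : Matrix.SpecialLinearGroup m F) : Matrix m m F).mulVec v =
      (g : Matrix m m F).mulVec ((h : Matrix m m F).mulVec v) by
    simp [Matrix.mulVec_mulVec]
  smul_zero g := Matrix.mulVec_zero _
  smul_add g v w := Matrix.mulVec_add _ _ _

theorem sl2_smul_def {m : Type*} [Fintype m] [DecidableEq m] {F : Type*} [CommRing F]
    (g : Matrix.SpecialLinearGroup m F) (v : m → F) :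
    g • v = (g : Matrix m m F).mulVec v := rfl

/-- The fixed points `C_V(A)` of a subgroup `A` acting on `V`, as an additive subgroup. -/
def fixedBySub (G : Type*) [Group G] (V : Type*) [AddCommGroup V] [DistribMulAction G V]
    (A : Subgroup G) : AddSubgroup V where
  carrier := {v | ∀ a ∈ A, a • v = v}
  zero_mem' := fun a _ => smul_zero a
  add_mem' := by
    intro x y hx hy a ha
    rw [smul_add, hx a ha, hy a ha]
  neg_mem' := by
    intro x hx a ha
    rw [smul_neg, hx a ha]

/-- The kernel `C_G(V)` of an action of `G` on `V`. -/
def actionKernel (G : Type*) [Group G] (V : Type*) [AddCommGroup V] [DistribMulAction G V] :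
    Subgroup G where
  carrier := {g | ∀ v : V, g • v = v}
  one_mem' := fun v => one_smul G v
  mul_mem' := by
    intro a b ha hb v
    rw [mul_smul, hb v, ha v]
  inv_mem' := by
    intro a ha v
    nth_rewrite 1 [← ha v]
    rw [inv_smul_smul]

/-- `A ≤ G` is an *offender* on the module `V`: `A/C_A(V)` is a nontrivial elementary abelian
`p`-group and `|V : C_V(A)| ≤ |A : C_A(V)|`. -/
def IsOffenderOn (p : ℕ) (G : Type*) [Group G] (V : Type*) [AddCommGroup V]
    [DistribMulAction G V] (A : Subgroup G) : Prop :=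
  (¬ A ≤ actionKernel G V) ∧
  (∀ a ∈ A, a ^ p ∈ actionKernel G V) ∧
  (∀ a ∈ A, ∀ b ∈ A, a * b * a⁻¹ * b⁻¹ ∈ actionKernel G V) ∧
  (fixedBySub G V A).index ≤ (actionKernel G V).relIndex A

/-- `A ≤ G` is a *best offender* on the module `V`: `A/C_A(V)` is a nontrivial elementary
abelian `p`-group and `|A : C_A(V)|·|C_V(A)| ≥ |B : C_B(V)|·|C_V(B)|` for all `B ≤ A`. -/
def IsBestOffenderOn (p : ℕ) (G : Type*) [Group G] (V : Type*) [AddCommGroup V]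
    [DistribMulAction G V] (A : Subgroup G) : Prop :=
  (¬ A ≤ actionKernel G V) ∧
  (∀ a ∈ A, a ^ p ∈ actionKernel G V) ∧
  (∀ a ∈ A, ∀ b ∈ A, a * b * a⁻¹ * b⁻¹ ∈ actionKernel G V) ∧
  ∀ B : Subgroup G, B ≤ A →
    (actionKernel G V).relIndex B * Nat.card ↥(fixedBySub G V B) ≤
      (actionKernel G V).relIndex A * Nat.card ↥(fixedBySub G V A)

/-!
Fixed points of a p-group are counted modulo `p` and `p ∣ |V|`, so `T` fixes some `v ≠ 0`.
An element of `SL₂(F)` fixing `v` has determinant 1 and eigenvalue 1, so its trace is 2 and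
by Cayley–Hamilton `(g - 1)² = 0`; in characteristic `p` this forces `g ^ p = 1`. Hence the
pointwise stabiliser of `C_V(T)` is a p-group containing `T`, so it is `T` by maximality.
-/

open Matrix MulAction

theorem pow_char_eq_one_of_sub_one_sq_eq_zero {R : Type*} [Ring R] {p : ℕ} [Fact p.Prime]
    [CharP R p] {a : R} (ha : (a - 1) ^ 2 = 0) : a ^ p = 1 := by
  have hp : (a - 1) ^ p = 0 := pow_eq_zero_of_le (Fact.out : p.Prime).two_le ha
  rwa [sub_pow_char_of_commute p (Commute.one_right a), one_pow, sub_eq_zero] at hp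

namespace Matrix

theorem sq_eq_zero_of_trace_eq_zero_of_det_eq_zero {R : Type*} [CommRing R] [Nontrivial R]
    {N : Matrix (Fin 2) (Fin 2) R} (htr : N.trace = 0) (hdet : N.det = 0) : N ^ 2 = 0 := by
  simpa [charpoly_fin_two, htr, hdet] using aeval_self_charpoly N

theorem det_sub_one_fin_two {R : Type*} [CommRing R] (M : Matrix (Fin 2) (Fin 2) R) :
    (M - 1).det = M.det - M.trace + 1 := by
  simp only [det_fin_two, trace_fin_two, sub_apply, one_apply_eq, one_apply_ne zero_ne_one,
    one_apply_ne one_ne_zero, sub_zero]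
  ring

theorem sub_one_sq_eq_zero_of_mulVec_eq_self {R : Type*} [CommRing R] [IsDomain R]
    {M : Matrix (Fin 2) (Fin 2) R} (hdet : M.det = 1) {v : Fin 2 → R} (hv : v ≠ 0)
    (hMv : M *ᵥ v = v) : (M - 1) ^ 2 = 0 := by
  have hdet' : (M - 1).det = 0 :=
    exists_mulVec_eq_zero_iff.mp ⟨v, hv, by rw [sub_mulVec, hMv, one_mulVec, sub_self]⟩
  refine sq_eq_zero_of_trace_eq_zero_of_det_eq_zero ?_ hdet'
  rw [det_sub_one_fin_two, hdet] at hdet'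
  rw [trace_sub, trace_one, Fintype.card_fin]
  linear_combination -hdet'

end Matrix

namespace Matrix.SpecialLinearGroup

variable {K : Type*} [CommRing K] [IsDomain K] {p : ℕ} [Fact p.Prime] [CharP K p]

theorem pow_char_eq_one_of_smul_eq_self (g : SpecialLinearGroup (Fin 2) K) {v : Fin 2 → K}
    (hv : v ≠ 0) (hgv : g • v = v) : g ^ p = 1 :=
  Subtype.ext <| by
    simpa using
      pow_char_eq_one_of_sub_one_sq_eq_zero (sub_one_sq_eq_zero_of_mulVec_eq_self g.2 hv hgv)

theorem isPGroup_fixingSubgroup {s : Set (Fin 2 → K)} {v : Fin 2 → K} (hv : v ≠ 0)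
    (hvs : v ∈ s) : IsPGroup p (fixingSubgroup (SpecialLinearGroup (Fin 2) K) s) := fun g =>
  ⟨1, Subtype.ext <| by
    simpa using pow_char_eq_one_of_smul_eq_self g.1 hv ((mem_fixingSubgroup_iff _).mp g.2 v hvs)⟩

end Matrix.SpecialLinearGroup

theorem IsPGroup.exists_mem_fixedPoints_ne_zero {p : ℕ} [Fact p.Prime] {G V : Type*} [Group G]
    [AddMonoid V] [DistribMulAction G V] [Finite V] (hG : IsPGroup p G) (hpV : p ∣ Nat.card V) :
    ∃ v ∈ fixedPoints G V, v ≠ 0 := by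
  obtain ⟨v, hv, h0v⟩ :=
    hG.exists_fixed_point_of_prime_dvd_card_of_fixed_point V hpV (a := 0) (smul_zero ·)
  exact ⟨v, hv, h0v.symm⟩

/-- Let `q = pⁿ`, `G = SL₂(F_q)`, `V = (F_q)²` the standard module and `T`
a Sylow `p`-subgroup of `G`.  Then the set of `g ∈ G` fixing every element of `C_V(T)` is
exactly `T`, i.e. `C_G(C_V(T)) = T`. -/
theorem sl2_centralizer_of_sylow_fixed_points
    {p n : ℕ} (hp : p.Prime) (hn : 0 < n)
    {F : Type*} [Field F] [Fintype F] (hF : Fintype.card F = p ^ n)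
    (T : Sylow p (Matrix.SpecialLinearGroup (Fin 2) F)) :
    {g : Matrix.SpecialLinearGroup (Fin 2) F |
        ∀ v ∈ fixedBySub (Matrix.SpecialLinearGroup (Fin 2) F) (Fin 2 → F)
          (T : Subgroup (Matrix.SpecialLinearGroup (Fin 2) F)), g • v = v} =
      ((T : Subgroup (Matrix.SpecialLinearGroup (Fin 2) F)) :
        Set (Matrix.SpecialLinearGroup (Fin 2) F)) := by
  have : Fact p.Prime := ⟨hp⟩
  have : CharP F p := charP_of_card_eq_prime_pow hF
  have hpV : p ∣ Nat.card (Fin 2 → F) := by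
    rw [Nat.card_eq_fintype_card, Fintype.card_fun, hF]
    exact dvd_pow (dvd_pow_self p hn.ne') two_ne_zero
  obtain ⟨v, hvT, hv⟩ := T.isPGroup'.exists_mem_fixedPoints_ne_zero hpV
  let C := fixingSubgroup (SpecialLinearGroup (Fin 2) F)
    (fixedBySub (SpecialLinearGroup (Fin 2) F) (Fin 2 → F) T : Set (Fin 2 → F))
  have hTC : (T : Subgroup _) ≤ C := fun t ht => (mem_fixingSubgroup_iff _).mpr fun w hw => hw t ht
  have hCT : C = T :=
    T.is_maximal' (SpecialLinearGroup.isPGroup_fixingSubgroup hv fun t ht => hvT ⟨t, ht⟩) hTC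
  ext g
  exact (mem_fixingSubgroup_iff _).symm.trans (SetLike.ext_iff.mp hCT g)
end

section
/- Let p be a prime, q = p^n, and let G be a finite group isomorphic to SL_2(F_q). Let V be a finite module over F_p for G such that the quotient module V/C_V(G) is a natural SL_2(q)-module for G. Let A ≤ G be an offender on V. Then: (a) |V : C_V(A)| = |A| = q and C_V(A) = C_V(a) for every a ∈ A with a ≠ 1; (b) [V,A,A] = 0, i.e. A acts quadratically on V. -/
/-!
The action of `G` on `V` is faithful, because it is faithful on `V / C_V(G) ≅ F_q²`. Hence `A`
is a `p`-subgroup of `SL₂(q)`, and `|A| ≤ q`, the `p`-part of `|GL₂(q)|`.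
Every `1 ≠ a ∈ A` is unipotent, so `N = a - 1` is a nonzero square-zero endomorphism of `F_q²`
and its kernel, the fixed line of `a`, has index `q`. Let `K_a ≤ V` be the preimage of this line;
then `C_V(A) ≤ C_V(a) ≤ K_a`, so `q ≤ |V : C_V(A)| ≤ |A| ≤ q`, all of these are equalities, and
`C_V(A) = C_V(a) = K_a`. Finally `[v, a]` maps to `N ψ(v) ∈ ker N`, so `[V, A] ≤ K_a = C_V(A)`.
-/

open Matrix Module

theorem Matrix.pow_card_eq_zero_of_isNilpotent {K n : Type*} [Field K] [Fintype n]
    [DecidableEq n] {N : Matrix n n K} (hN : IsNilpotent N) : N ^ Fintype.card n = 0 := by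
  have hchar := sub_eq_zero.mp (isNilpotent_charpoly_sub_pow_of_isNilpotent hN).eq_zero
  simpa [hchar] using N.aeval_self_charpoly

theorem Matrix.sub_one_pow_card_eq_zero {K n : Type*} [Field K] [Fintype n] [DecidableEq n]
    [Nonempty n] (p : ℕ) [Fact p.Prime] [CharP K p] {M : Matrix n n K} (hM : M ^ p = 1) :
    (M - 1) ^ Fintype.card n = 0 :=
  pow_card_eq_zero_of_isNilpotent
    ⟨p, by rw [sub_pow_char_of_commute p (Commute.one_right M), hM, one_pow, sub_self]⟩

theorem LinearMap.finrank_range_eq_one_of_comp_self_eq_zero {K W : Type*} [Field K]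
    [AddCommGroup W] [Module K W] [FiniteDimensional K W] (hW : finrank K W = 2)
    {f : W →ₗ[K] W} (hf : f ≠ 0) (hff : f ∘ₗ f = 0) : finrank K (range f) = 1 := by
  have hrange_le : finrank K (range f) ≤ finrank K (ker f) :=
    Submodule.finrank_mono (range_le_ker_iff.mpr hff)
  have hrange_ne : finrank K (range f) ≠ 0 := by
    rwa [Ne, Submodule.finrank_eq_zero, range_eq_bot]
  have := f.finrank_range_add_finrank_ker
  omega

theorem LinearMap.index_ker_eq_card_of_comp_self_eq_zero {K W : Type*} [Field K] [Fintype K]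
    [AddCommGroup W] [Module K W] [FiniteDimensional K W] (hW : finrank K W = 2)
    {f : W →ₗ[K] W} (hf : f ≠ 0) (hff : f ∘ₗ f = 0) :
    (ker f).toAddSubgroup.index = Fintype.card K := by
  rw [show (ker f).toAddSubgroup = f.toAddMonoidHom.ker from rfl, AddSubgroup.index_ker,
    show Nat.card f.toAddMonoidHom.range = Nat.card (range f) from rfl,
    Module.natCard_eq_pow_finrank (K := K), finrank_range_eq_one_of_comp_self_eq_zero hW hf hff,
    pow_one, Nat.card_eq_fintype_card]

theorem Nat.coprime_pow_sub_one_of_dvd {p q m : ℕ} (hpq : p ∣ q) (hq : 0 < q) (hm : m ≠ 0) :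
    Nat.Coprime p (q ^ m - 1) :=
  Nat.Coprime.coprime_dvd_left (dvd_pow hpq hm)
    ((Nat.coprime_self_sub_right (Nat.one_le_pow _ _ hq)).mpr (Nat.coprime_one_right _))

theorem IsPGroup.card_le_card_of_injective_GL_two {p : ℕ} [Fact p.Prime] {F : Type*} [Field F]
    [Fintype F] [CharP F p] {H : Type*} [Group H] (hH : IsPGroup p H)
    {f : H →* GL (Fin 2) F} (hf : Function.Injective f) : Nat.card H ≤ Fintype.card F := by
  have : Finite H := Finite.of_injective f hf
  obtain ⟨k, hk⟩ := IsPGroup.iff_card.mp hH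
  set q := Fintype.card F
  have hq : 0 < q := Fintype.card_pos
  have hpq : p ∣ q := (CharP.cast_eq_zero_iff F p q).mp (Nat.cast_card_eq_zero F)
  have hdvd : p ^ k ∣ (q ^ 2 - 1) * (q * (q - 1)) := by
    rw [← hk, Nat.mul_sub_one, ← sq]
    simpa [card_GL_field, Fin.prod_univ_two] using Subgroup.card_dvd_of_injective f hf
  have h2 := (Nat.coprime_pow_sub_one_of_dvd hpq hq two_ne_zero).pow_left k
  have h1 := (Nat.coprime_pow_sub_one_of_dvd hpq hq one_ne_zero).pow_left k
  rw [pow_one] at h1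
  rw [hk]
  exact Nat.le_of_dvd hq (h1.dvd_of_dvd_mul_right (h2.dvd_of_dvd_mul_left hdvd))

theorem AddSubgroup.eq_of_le_of_index_le {V : Type*} [AddGroup V] {H K : AddSubgroup V}
    [H.FiniteIndex] (hle : H ≤ K) (hindex : H.index ≤ K.index) : H = K :=
  hle.eq_or_lt.resolve_right fun hlt => (index_strictAnti hlt).not_ge hindex

section NaturalModule

variable {F : Type} [Field F] {G V : Type*} [Group G] [AddCommGroup V]

theorem actionKernel_eq_bot_of_surjective [DistribMulAction G V]
    {φ : G ≃* SpecialLinearGroup (Fin 2) F} {ψ : V →+ (Fin 2 → F)} (hψ : Function.Surjective ψ)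
    (hcompat : ∀ (g : G) (v : V), ψ (g • v) = (φ g : Matrix (Fin 2) (Fin 2) F) *ᵥ ψ v) :
    actionKernel G V = ⊥ := by
  refine (Subgroup.eq_bot_iff_forall _).mpr fun g hg => φ.injective ?_
  have hφg : (φ g : Matrix (Fin 2) (Fin 2) F) = 1 := ext_iff_mulVec.mpr fun w => by
    obtain ⟨v, rfl⟩ := hψ w
    rw [← hcompat, hg v, one_mulVec]
  rw [map_one]
  exact Subtype.coe_injective (hφg.trans Matrix.SpecialLinearGroup.coe_one.symm)

theorem sub_one_mul_self_eq_zero_of_pow_eq_one (p : ℕ) [Fact p.Prime] [CharP F p]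
    (φ : G ≃* SpecialLinearGroup (Fin 2) F) {g : G} (hg : g ^ p = 1) :
    ((φ g : Matrix (Fin 2) (Fin 2) F) - 1) * ((φ g : Matrix (Fin 2) (Fin 2) F) - 1) = 0 := by
  rw [← sq]
  refine sub_one_pow_card_eq_zero p ?_
  simpa using congrArg (fun h : SpecialLinearGroup (Fin 2) F => (h : Matrix (Fin 2) (Fin 2) F))
    (show φ g ^ p = 1 by rw [← map_pow, hg, map_one])

variable (φ : G ≃* SpecialLinearGroup (Fin 2) F) (ψ : V →+ (Fin 2 → F))

def preimageFixedPoints (g : G) : AddSubgroup V :=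
  (LinearMap.ker ((φ g : Matrix (Fin 2) (Fin 2) F) - 1).mulVecLin).toAddSubgroup.comap ψ

variable {φ ψ}

theorem mem_preimageFixedPoints {g : G} {v : V} :
    v ∈ preimageFixedPoints φ ψ g ↔ ((φ g : Matrix (Fin 2) (Fin 2) F) - 1) *ᵥ ψ v = 0 :=
  Iff.rfl

theorem mem_preimageFixedPoints_of_smul_eq [DistribMulAction G V]
    (hcompat : ∀ (g : G) (v : V), ψ (g • v) = (φ g : Matrix (Fin 2) (Fin 2) F) *ᵥ ψ v)
    {g : G} {v : V} (hv : g • v = v) : v ∈ preimageFixedPoints φ ψ g := by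
  rw [mem_preimageFixedPoints, sub_mulVec, one_mulVec, ← hcompat, hv, sub_self]

theorem smul_sub_self_mem_preimageFixedPoints (p : ℕ) [Fact p.Prime] [CharP F p]
    [DistribMulAction G V]
    (hcompat : ∀ (g : G) (v : V), ψ (g • v) = (φ g : Matrix (Fin 2) (Fin 2) F) *ᵥ ψ v)
    {g : G} (hg : g ^ p = 1) (v : V) : g • v - v ∈ preimageFixedPoints φ ψ g := by
  have hψ : ψ (g • v - v) = ((φ g : Matrix (Fin 2) (Fin 2) F) - 1) *ᵥ ψ v := by
    rw [map_sub, hcompat, sub_mulVec, one_mulVec]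
  rw [mem_preimageFixedPoints, hψ, mulVec_mulVec, sub_one_mul_self_eq_zero_of_pow_eq_one p φ hg,
    zero_mulVec]

theorem index_preimageFixedPoints (p : ℕ) [Fact p.Prime] [Fintype F] [CharP F p]
    (hψ : Function.Surjective ψ) {g : G} (hg : g ^ p = 1) (hg1 : g ≠ 1) :
    (preimageFixedPoints φ ψ g).index = Fintype.card F := by
  rw [preimageFixedPoints, AddSubgroup.index_comap_of_surjective _ hψ]
  refine LinearMap.index_ker_eq_card_of_comp_self_eq_zero
    (by simp : finrank F (Fin 2 → F) = 2) ?_ ?_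
  · intro h
    have hN : (φ g : Matrix (Fin 2) (Fin 2) F) - 1 = 0 := ext_iff_mulVec.mpr fun v => by
      simpa only [mulVecLin_apply, LinearMap.zero_apply, zero_mulVec] using LinearMap.congr_fun h v
    refine hg1 (φ.injective ?_)
    rw [map_one]
    exact Subtype.coe_injective
      ((sub_eq_zero.mp hN).trans Matrix.SpecialLinearGroup.coe_one.symm)
  · rw [← mulVecLin_mul, sub_one_mul_self_eq_zero_of_pow_eq_one p φ hg, mulVecLin_zero]

theorem card_le_card_of_forall_pow_eq_one {p : ℕ} [Fact p.Prime] [Fintype F] [CharP F p]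
    (φ : G ≃* SpecialLinearGroup (Fin 2) F) {A : Subgroup G} (hA : ∀ a ∈ A, a ^ p = 1) :
    Nat.card A ≤ Fintype.card F :=
  IsPGroup.card_le_card_of_injective_GL_two
    (fun a => ⟨1, by simpa [Subtype.ext_iff] using hA a a.2⟩)
    (f := (SpecialLinearGroup.toGL.comp φ.toMonoidHom).comp A.subtype)
    (SpecialLinearGroup.toGL_injective.comp (φ.injective.comp A.subtype_injective))

end NaturalModule

theorem offender_on_quotient_natural_sl2_module_general
    {p n : ℕ} (hp : p.Prime)
    {F : Type} [Field F] [Fintype F] (hF : Fintype.card F = p ^ n)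
    {G : Type*} [Group G]
    {V : Type*} [AddCommGroup V] [Finite V] [DistribMulAction G V]
    (φ : G ≃* Matrix.SpecialLinearGroup (Fin 2) F)
    (ψ : V →+ (Fin 2 → F)) (hψsurj : Function.Surjective ψ)
    (hcompat : ∀ (g : G) (v : V), ψ (g • v) = (φ g : Matrix (Fin 2) (Fin 2) F).mulVec (ψ v))
    (A : Subgroup G) (hA : IsOffenderOn p G V A) :
    ((fixedBySub G V A).index = Nat.card ↥A ∧ Nat.card ↥A = p ^ n ∧
      ∀ a ∈ A, a ≠ 1 → (fixedBySub G V A : Set V) = {v : V | a • v = v}) ∧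
    (∀ a ∈ A, ∀ w ∈ AddSubgroup.closure {w : V | ∃ b ∈ A, ∃ v : V, w = b • v - v},
      a • w = w) := by
  have : Fact p.Prime := ⟨hp⟩
  have : CharP F p := charP_of_card_eq_prime_pow hF
  obtain ⟨hA_ne, hA_exp, -, hA_index⟩ := hA
  simp only [actionKernel_eq_bot_of_surjective hψsurj hcompat, Subgroup.mem_bot,
    Subgroup.relIndex_bot_left, le_bot_iff] at hA_ne hA_exp hA_index
  obtain ⟨⟨a₀, ha₀⟩, ha₀1⟩ := Subgroup.ne_bot_iff_exists_ne_one.mp hA_ne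
  have hcard_le : Nat.card A ≤ p ^ n := hF ▸ card_le_card_of_forall_pow_eq_one φ hA_exp
  set C := fixedBySub G V A
  have hC_le : ∀ a ∈ A, C ≤ preimageFixedPoints φ ψ a := fun a ha v hv =>
    mem_preimageFixedPoints_of_smul_eq hcompat (hv a ha)
  have hK_index : ∀ a ∈ A, a ≠ 1 → (preimageFixedPoints φ ψ a).index = p ^ n := fun a ha ha1 =>
    hF ▸ index_preimageFixedPoints p hψsurj (hA_exp a ha) ha1
  have hC_index : C.index = p ^ n := le_antisymm (hA_index.trans hcard_le)
    (hK_index a₀ ha₀ (by simpa using ha₀1) ▸ AddSubgroup.index_antitone (hC_le a₀ ha₀))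
  have hC_eq : ∀ a ∈ A, a ≠ 1 → C = preimageFixedPoints φ ψ a := fun a ha ha1 =>
    AddSubgroup.eq_of_le_of_index_le (hC_le a ha) (by rw [hC_index, hK_index a ha ha1])
  have hcard : Nat.card A = p ^ n := le_antisymm hcard_le (hC_index ▸ hA_index)
  refine ⟨⟨hC_index.trans hcard.symm, hcard, fun a ha ha1 => ?_⟩, fun a ha w hw => ?_⟩
  · refine subset_antisymm (fun v hv => hv a ha) fun v hv => ?_
    rw [hC_eq a ha ha1]
    exact mem_preimageFixedPoints_of_smul_eq hcompat hv
  · suffices hcomm : AddSubgroup.closure {w : V | ∃ b ∈ A, ∃ v : V, w = b • v - v} ≤ C from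
      hcomm hw a ha
    rw [AddSubgroup.closure_le]
    rintro _ ⟨b, hb, v, rfl⟩
    rcases eq_or_ne b 1 with rfl | hb1
    · simp
    · rw [SetLike.mem_coe, hC_eq b hb hb1]
      exact smul_sub_self_mem_preimageFixedPoints p hcompat (hA_exp b hb) v

/-- Let `q = pⁿ` and let `G` be a finite group isomorphic to `SL₂(F_q)`.
Let `V` be a finite `F_p`-module for `G` such that `V/C_V(G)` is a natural `SL₂(q)`-module
for `G` (witnessed by a group isomorphism `φ : G ≃* SL₂(F)` and a surjective additive map
`ψ : V → F²` with kernel `C_V(G)`, equivariant for the actions).  Let `A ≤ G` be an offender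
on `V`.  Then (a) `|V : C_V(A)| = |A| = q` and `C_V(A) = C_V(a)` for every `1 ≠ a ∈ A`;
(b) `[V, A, A] = 0`, i.e. `A` acts quadratically on `V`. -/
theorem offender_on_quotient_natural_sl2_module
    {p n : ℕ} (hp : p.Prime) (hn : 0 < n)
    {F : Type} [Field F] [Fintype F] (hF : Fintype.card F = p ^ n)
    {G : Type*} [Group G] [Finite G]
    {V : Type*} [AddCommGroup V] [Finite V] [Module (ZMod p) V] [DistribMulAction G V]
    (φ : G ≃* Matrix.SpecialLinearGroup (Fin 2) F)
    (ψ : V →+ (Fin 2 → F)) (hψsurj : Function.Surjective ψ)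
    (hψker : ∀ v : V, ψ v = 0 ↔ ∀ g : G, g • v = v)
    (hcompat : ∀ (g : G) (v : V), ψ (g • v) = (φ g : Matrix (Fin 2) (Fin 2) F).mulVec (ψ v))
    (A : Subgroup G) (hA : IsOffenderOn p G V A) :
    ((fixedBySub G V A).index = Nat.card ↥A ∧ Nat.card ↥A = p ^ n ∧
      ∀ a ∈ A, a ≠ 1 → (fixedBySub G V A : Set V) = {v : V | a • v = v}) ∧
    (∀ a ∈ A, ∀ w ∈ AddSubgroup.closure {w : V | ∃ b ∈ A, ∃ v : V, w = b • v - v},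
      a • w = w) :=
  offender_on_quotient_natural_sl2_module_general hp hF φ ψ hψsurj hcompat A hA
end

section
/- Let p be a prime, q = p^n, and let G be a finite group acting faithfully on a finite F_p-module V (i.e. C_G(V) = 1). Let H be a normal subgroup of G such that V, with the restricted action, is a natural SL_2(q)-module for H, and let T be a Sylow p-subgroup of G with C_T(H) ≤ H. Then C_T(C_V(T ∩ H)) ≤ H, where C_V(T ∩ H) is the set of vectors fixed by T ∩ H and C_T(X) = {t ∈ T : t·v = v for all v ∈ X}. -/
/-!
Since `H ⊴ G`, conjugation by `t ∈ T` normalises `H ≅ SL₂(q)`; hence for every scalar `λ ∈ F_q`,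
the map `t ∘ λ ∘ t⁻¹` on `V ≅ F_q²` commutes with `SL₂(q)` and is, by Schur's lemma, a scalar
`c(λ)`. The `p`-group `T ∩ H` fixes a nonzero vector `v₀`, and `C_V(T ∩ H)` is an `F_q`-subspace,
so if `t` centralises it then `c(λ) = λ`: `t` acts `F_q`-linearly. Its determinant is then a
`p`-power root of unity in characteristic `p`, hence `1`, so `t` acts like an element of `H`,
and faithfulness gives `t ∈ H`.
-/

open Matrix

theorem LinearMap.det_eq_one_of_pow_char_pow_eq_one {K M : Type*} [Field K] [AddCommGroup M]
    [Module K M] {p : ℕ} [ExpChar K p] {f : Module.End K M} {k : ℕ} (hf : f ^ p ^ k = 1) :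
    LinearMap.det f = 1 :=
  iterateFrobenius_inj K p k <| by
    rw [_root_.iterateFrobenius_def, ← map_pow, hf, map_one, map_one]

theorem exists_eq_smul_of_commute_specialLinearGroup {F : Type*} [Field F]
    (ε : (Fin 2 → F) →+ (Fin 2 → F))
    (hε : ∀ (g : SpecialLinearGroup (Fin 2) F) (u : Fin 2 → F), ε (g • u) = g • ε u) :
    ∃ c : F, ∀ u, ε u = c • u := by
  set y := ε ![0, 1]
  refine ⟨y 1, ?_⟩
  have on_line (a : F) : ε ![a, 1] = ![y 0 + a * y 1, y 1] := by
    have h : ε (!![1, a; 0, 1] *ᵥ ![0, 1]) = !![1, a; 0, 1] *ᵥ y :=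
      hε ⟨!![1, a; 0, 1], by simp [det_fin_two_of]⟩ ![0, 1]
    have hv : !![1, a; 0, 1] *ᵥ ![0, 1] = ![a, 1] := by
      ext i; fin_cases i <;> simp [mulVec, dotProduct]
    rw [← hv, h]
    ext i; fin_cases i <;> simp [mulVec, dotProduct]
  have on_first_axis (a : F) : ε ![a, 0] = y 1 • ![a, 0] := by
    have hv : ![a, 0] = ![a, 1] - ![0, 1] := by simp
    rw [hv, map_sub, on_line, on_line 0]
    ext i; fin_cases i <;> simp [mul_comm]
  have on_second_axis (a : F) : ε ![0, a] = y 1 • ![0, a] := by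
    have h : ε (!![0, -1; 1, 0] *ᵥ ![a, 0]) = !![0, -1; 1, 0] *ᵥ ε ![a, 0] :=
      hε ⟨!![0, -1; 1, 0], by simp [det_fin_two_of]⟩ ![a, 0]
    have hv : !![0, -1; 1, 0] *ᵥ ![a, 0] = ![0, a] := by
      ext i; fin_cases i <;> simp [mulVec, dotProduct]
    rw [← hv, h, on_first_axis, mulVec_smul]
  intro u
  have hu : u = ![u 0, 0] + ![0, u 1] := by ext i; fin_cases i <;> simp
  rw [hu, map_add, on_first_axis, on_second_axis, smul_add]

section NaturalModule

variable {G : Type*} [Group G] {V : Type*} [AddCommGroup V] [DistribMulAction G V]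

def transportedAction {W : Type*} [AddCommGroup W] (ψ : V ≃+ W) : G →* AddMonoid.End W where
  toFun g :=
    { toFun w := ψ (g • ψ.symm w)
      map_zero' := by simp
      map_add' := by simp }
  map_one' := by ext w; change ψ ((1 : G) • ψ.symm w) = w; simp
  map_mul' g h := by
    ext w; change ψ ((g * h) • ψ.symm w) = ψ (g • ψ.symm (ψ (h • ψ.symm w))); simp [mul_smul]

@[simp]
theorem transportedAction_apply {W : Type*} [AddCommGroup W] (ψ : V ≃+ W) (g : G) (w : W) :
    transportedAction ψ g w = ψ (g • ψ.symm w) := rfl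

theorem transportedAction_injective {W : Type*} [AddCommGroup W] (ψ : V ≃+ W)
    (hfaith : ∀ g : G, (∀ v : V, g • v = v) → g = 1) :
    Function.Injective (transportedAction (G := G) ψ) :=
  (injective_iff_map_eq_one _).mpr fun g hg => hfaith g fun v => ψ.injective <| by
    simpa using DFunLike.congr_fun hg (ψ v)

theorem IsPGroup.exists_ne_zero_mem_fixedBySub {p : ℕ} [Fact p.Prime] [Finite V]
    {A : Subgroup G} (hA : IsPGroup p A) (hV : p ∣ Nat.card V) :
    ∃ v ∈ fixedBySub G V A, v ≠ 0 := by
  obtain ⟨v, hv, hne⟩ := hA.exists_fixed_point_of_prime_dvd_card_of_fixed_point V hV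
    (a := 0) fun _ => smul_zero _
  exact ⟨v, fun a ha => hv ⟨a, ha⟩, hne.symm⟩

variable {F : Type*} [Field F] {H : Subgroup G} {φ : H ≃* SpecialLinearGroup (Fin 2) F}
  {ψ : V ≃+ (Fin 2 → F)}

theorem transportedAction_smul_of_mem
    (hcompat : ∀ (h : H) (u : Fin 2 → F), transportedAction ψ (h : G) u = φ h • u)
    {g : G} (hg : g ∈ H) (a : F) (u : Fin 2 → F) :
    transportedAction ψ g (a • u) = a • transportedAction ψ g u := by
  rw [show g = ((⟨g, hg⟩ : H) : G) from rfl, hcompat, hcompat, sl2_smul_def, sl2_smul_def,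
    mulVec_smul]

theorem symm_smul_mem_fixedBySub
    (hcompat : ∀ (h : H) (u : Fin 2 → F), transportedAction ψ (h : G) u = φ h • u)
    {A : Subgroup G} (hA : A ≤ H) {v : V}
    (hv : v ∈ fixedBySub G V A) (a : F) : ψ.symm (a • ψ v) ∈ fixedBySub G V A := by
  intro g hg
  have h := transportedAction_smul_of_mem hcompat (hA hg) a (ψ v)
  simp only [transportedAction_apply, ψ.symm_apply_apply, hv g hg] at h
  simpa using congrArg ψ.symm h

theorem exists_transportedAction_conj_eq_smul
    (hcompat : ∀ (h : H) (u : Fin 2 → F), transportedAction ψ (h : G) u = φ h • u)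
    {t : G} (ht : t ∈ Subgroup.normalizer (H : Set G)) (a : F) : ∃ c : F, ∀ u,
      transportedAction ψ t (a • transportedAction ψ t⁻¹ u) = c • u := by
  set ρ := transportedAction (G := G) ψ
  set σ := DistribMulAction.toAddMonoidEnd F (Fin 2 → F) a
  refine exists_eq_smul_of_commute_specialLinearGroup (ρ t * σ * ρ t⁻¹) fun g u => ?_
  obtain ⟨h, rfl⟩ := φ.surjective g
  set h' := t⁻¹ * h * t
  have conj_left : ρ t⁻¹ * ρ h = ρ h' * ρ t⁻¹ := by simp only [h', ← map_mul]; group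
  have conj_right : ρ t * ρ h' = ρ h * ρ t := by simp only [h', ← map_mul]; group
  have σ_comm : σ * ρ h' = ρ h' * σ := by
    ext1 u
    exact (transportedAction_smul_of_mem hcompat
      ((Subgroup.mem_normalizer_iff''.mp ht h).mp h.2) a u).symm
  have key : ρ t * σ * ρ t⁻¹ * ρ h = ρ h * (ρ t * σ * ρ t⁻¹) := calc
    _ = ρ t * (σ * ρ h') * ρ t⁻¹ := by simp only [mul_assoc, conj_left]
    _ = ρ t * ρ h' * σ * ρ t⁻¹ := by simp only [σ_comm, mul_assoc]
    _ = _ := by simp only [conj_right, mul_assoc]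
  rw [← hcompat, ← hcompat]
  exact DFunLike.congr_fun key u

theorem transportedAction_smul_of_fixed
    (hcompat : ∀ (h : H) (u : Fin 2 → F), transportedAction ψ (h : G) u = φ h • u)
    {t : G} (ht : t ∈ Subgroup.normalizer (H : Set G))
    {w₀ : Fin 2 → F} (hw₀ : w₀ ≠ 0) (hfix : ∀ a : F, transportedAction ψ t (a • w₀) = a • w₀)
    (a : F) (u : Fin 2 → F) :
    transportedAction ψ t (a • u) = a • transportedAction ψ t u := by
  obtain ⟨c, hc⟩ := exists_transportedAction_conj_eq_smul hcompat ht a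
  have htw₀ : transportedAction ψ t⁻¹ w₀ = w₀ := by
    simpa using (congrArg (transportedAction ψ t⁻¹) (hfix 1)).symm
  have hca : c = a := smul_left_injective F hw₀ <| by simpa [htw₀, hfix] using (hc w₀).symm
  simpa [hca] using hc (transportedAction ψ t u)

theorem mem_of_transportedAction_smul {p : ℕ} [ExpChar F p]
    (hcompat : ∀ (h : H) (u : Fin 2 → F), transportedAction ψ (h : G) u = φ h • u)
    (hfaith : ∀ g : G, (∀ v : V, g • v = v) → g = 1) {t : G} {k : ℕ} (htk : t ^ p ^ k = 1)
    (hlin : ∀ (a : F) (u : Fin 2 → F),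
      transportedAction ψ t (a • u) = a • transportedAction ψ t u) :
    t ∈ H := by
  let f : Module.End F (Fin 2 → F) :=
    { toFun := transportedAction ψ t, map_add' := map_add _, map_smul' := hlin }
  have hf : f ^ p ^ k = 1 := LinearMap.ext fun u => by
    rw [Module.End.pow_apply, Module.End.one_apply]
    change (transportedAction ψ t)^[p ^ k] u = u
    rw [← AddMonoid.End.coe_pow, ← map_pow, htk, map_one]
    rfl
  let g : SpecialLinearGroup (Fin 2) F :=
    ⟨LinearMap.toMatrix' f, by
      rw [LinearMap.det_toMatrix', LinearMap.det_eq_one_of_pow_char_pow_eq_one hf]⟩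
  have : transportedAction ψ (φ.symm g : G) = transportedAction ψ t := by
    ext1 u
    rw [hcompat, MulEquiv.apply_symm_apply, sl2_smul_def]
    exact LinearMap.toMatrix'_mulVec f u
  rw [← transportedAction_injective ψ hfaith this]
  exact (φ.symm g).2

end NaturalModule

theorem centralizer_of_fixed_points_le_of_natural_module_general
    {p n : ℕ} (hp : p.Prime)
    {F : Type} [Field F] [Fintype F] (hF : Fintype.card F = p ^ n)
    {G : Type*} [Group G]
    {V : Type*} [AddCommGroup V] [Finite V] [DistribMulAction G V]
    (hfaith : ∀ g : G, (∀ v : V, g • v = v) → g = 1)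
    (H : Subgroup G) (hH : H.Normal)
    (φ : H ≃* Matrix.SpecialLinearGroup (Fin 2) F)
    (ψ : V ≃+ (Fin 2 → F))
    (hcompat : ∀ (h : H) (v : V),
      ψ ((h : G) • v) = (φ h : Matrix (Fin 2) (Fin 2) F).mulVec (ψ v))
    (T : Sylow p G) :
    ∀ t ∈ (T : Subgroup G),
      (∀ v ∈ fixedBySub G V ((T : Subgroup G) ⊓ H), t • v = v) → t ∈ H := by
  intro t ht hfix
  have : Fact p.Prime := ⟨hp⟩
  have : CharP F p := charP_of_card_eq_prime_pow hF
  have hnat (h : H) (u : Fin 2 → F) : transportedAction ψ (h : G) u = φ h • u := by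
    rw [transportedAction_apply, hcompat, ψ.apply_symm_apply, sl2_smul_def]
  have hV : p ∣ Nat.card V := by
    rw [Nat.card_congr ψ.toEquiv, Nat.card_fun, Nat.card_eq_fintype_card (α := F)]
    exact dvd_pow ((prime_dvd_char_iff_dvd_card p).mp (by rw [ringChar.eq F p])) (by simp)
  obtain ⟨v₀, hv₀, hne⟩ :=
    (T.isPGroup'.to_le (inf_le_left (b := H))).exists_ne_zero_mem_fixedBySub hV
  have htH : t ∈ Subgroup.normalizer (H : Set G) := by
    rw [Subgroup.normalizer_eq_top_iff.mpr hH]; trivial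
  obtain ⟨k, hk⟩ := T.isPGroup' ⟨t, ht⟩
  refine mem_of_transportedAction_smul hnat hfaith (by simpa using congrArg Subtype.val hk) ?_
  refine transportedAction_smul_of_fixed hnat htH (ψ.map_ne_zero_iff.mpr hne) fun a => ?_
  simp [hfix _ (symm_smul_mem_fixedBySub hnat inf_le_right hv₀ a)]

/-- Let `q = pⁿ` and let `G` be a finite group acting faithfully on a finite
`F_p`-module `V`.  Let `H ⊴ G` be a normal subgroup such that `V`, with the restricted action,
is a natural `SL₂(q)`-module for `H`, and let `T` be a Sylow `p`-subgroup of `G` with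
`C_T(H) ≤ H`.  Then `C_T(C_V(T ∩ H)) ≤ H`. -/
theorem centralizer_of_fixed_points_le_of_natural_module
    {p n : ℕ} (hp : p.Prime) (hn : 0 < n)
    {F : Type} [Field F] [Fintype F] (hF : Fintype.card F = p ^ n)
    {G : Type*} [Group G] [Finite G]
    {V : Type*} [AddCommGroup V] [Finite V] [Module (ZMod p) V] [DistribMulAction G V]
    (hfaith : ∀ g : G, (∀ v : V, g • v = v) → g = 1)
    (H : Subgroup G) (hH : H.Normal)
    (φ : H ≃* Matrix.SpecialLinearGroup (Fin 2) F)
    (ψ : V ≃+ (Fin 2 → F))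
    (hcompat : ∀ (h : H) (v : V),
      ψ ((h : G) • v) = (φ h : Matrix (Fin 2) (Fin 2) F).mulVec (ψ v))
    (T : Sylow p G)
    (hCT : ∀ t ∈ (T : Subgroup G), (∀ h ∈ H, t * h = h * t) → t ∈ H) :
    ∀ t ∈ (T : Subgroup G),
      (∀ v ∈ fixedBySub G V ((T : Subgroup G) ⊓ H), t • v = v) → t ∈ H :=
  centralizer_of_fixed_points_le_of_natural_module_general hp hF hfaith H hH φ ψ hcompat T
end
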